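/- arXiv:1604.00290 — 2 statements merged into one kernel-verified Lean document; each statement's English description precedes it below -/
import Mathlib

section
/- Let k ≥ 1 be a real number and suppose that every row of the matrix A has ℓ² norm at most k. Then every coordinate of every fundamental solution to the system Σ is at most n^{3/2}·k^{n−1}. (Theorem 8.1(2).) -/
/-
Every nonnegative real solution `v` of `A v = 0` is a nonnegative combination of integral solutions
with coordinates at most `k ^ (n - 1)`. By induction on the support of `v`: either the solutions
supported inside `supp v` form a line, spanned by the vector of signed maximal minors of `n - 1`
independent rows among those of `A` and the unit rows off `supp v` (integral, and bounded by
`k ^ (n - 1)` by Hadamard's inequality), or `v` can be moved in both directions along a second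
such solution until a coordinate vanishes, writing it through vectors of smaller support.
By Carathéodory's theorem for cones, `n` generators suffice. If a generator of a fundamental
solution `x` had coefficient `≥ 1`, it would split off from `x`; hence all coefficients are `< 1`
and `x j ≤ n * k ^ (n - 1) ≤ n ^ (3 / 2) * k ^ (n - 1)`.
-/

/-- A solution to the system Σ: `A x = 0`, all coordinates nonnegative, and for each
pair `(i, j)` in `C`, `x i = 0` or `x j = 0`. -/
def IsSolution {m n : ℕ} (A : Matrix (Fin m) (Fin n) ℤ)
    (C : Finset (Fin n × Fin n)) (x : Fin n → ℝ) : Prop :=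
  (∀ i : Fin m, ∑ j : Fin n, (A i j : ℝ) * x j = 0) ∧
    (∀ j : Fin n, 0 ≤ x j) ∧
    (∀ p ∈ C, x p.1 = 0 ∨ x p.2 = 0)

/-- A vector is integral if every coordinate is an integer. -/
def IsIntegralVec {n : ℕ} (x : Fin n → ℝ) : Prop :=
  ∀ j : Fin n, ∃ z : ℤ, x j = (z : ℝ)

/-- An integral solution `x` is a vertex solution if (i) whenever `k • x = y + z` for a
positive real `k` and solutions `y`, `z`, both `y` and `z` are scalar multiples of `x`;
and (ii) `x` is not `k • y` for an integer `k ≥ 2` and an integral solution `y`. -/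
def IsVertexSolution {m n : ℕ} (A : Matrix (Fin m) (Fin n) ℤ)
    (C : Finset (Fin n × Fin n)) (x : Fin n → ℝ) : Prop :=
  IsSolution A C x ∧ IsIntegralVec x ∧
    (∀ k : ℝ, 0 < k → ∀ y z : Fin n → ℝ, IsSolution A C y → IsSolution A C z →
      k • x = y + z → (∃ c : ℝ, y = c • x) ∧ ∃ c : ℝ, z = c • x) ∧
    ¬∃ (k : ℤ) (y : Fin n → ℝ), 2 ≤ k ∧ IsSolution A C y ∧ IsIntegralVec y ∧
      x = (k : ℝ) • y

/-- An integral solution is fundamental if it is not the sum of two nonzero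
integral solutions. -/
def IsFundamental {m n : ℕ} (A : Matrix (Fin m) (Fin n) ℤ)
    (C : Finset (Fin n × Fin n)) (x : Fin n → ℝ) : Prop :=
  IsSolution A C x ∧ IsIntegralVec x ∧
    ¬∃ y z : Fin n → ℝ, IsSolution A C y ∧ IsIntegralVec y ∧
      IsSolution A C z ∧ IsIntegralVec z ∧ y ≠ 0 ∧ z ≠ 0 ∧ x = y + z

open Finset Matrix

/-- Hadamard's inequality. -/
theorem Matrix.abs_det_le_prod_sqrt_sum_sq {d : ℕ} (M : Matrix (Fin d) (Fin d) ℝ) :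
    |M.det| ≤ ∏ i, √(∑ j, M i j ^ 2) := by
  have : Fact (Module.finrank ℝ (EuclideanSpace ℝ (Fin d)) = d) :=
    ⟨finrank_euclideanSpace_fin⟩
  let b := EuclideanSpace.basisFun (Fin d) ℝ
  let v : Fin d → EuclideanSpace ℝ (Fin d) := fun i => WithLp.toLp 2 (M i)
  have hdet : b.toBasis.det v = M.det := by
    rw [Module.Basis.det_apply, ← Matrix.det_transpose]
    congr 1
  calc |M.det| = |b.toBasis.orientation.volumeForm v| := by
        rw [b.toBasis.orientation.volumeForm_robust' b, hdet]
    _ ≤ ∏ i, ‖v i‖ := b.toBasis.orientation.abs_volumeForm_apply_le v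
    _ = ∏ i, √(∑ j, M i j ^ 2) := by simp [v, EuclideanSpace.norm_eq]

theorem Matrix.abs_det_le_pow_of_sqrt_sum_sq_le {d : ℕ} (M : Matrix (Fin d) (Fin d) ℝ) {k : ℝ}
    (hM : ∀ i, √(∑ j, M i j ^ 2) ≤ k) : |M.det| ≤ k ^ d := by
  calc |M.det| ≤ ∏ i, √(∑ j, M i j ^ 2) := M.abs_det_le_prod_sqrt_sum_sq
    _ ≤ ∏ _i : Fin d, k := prod_le_prod (fun _ _ => Real.sqrt_nonneg _) fun i _ => hM i
    _ = k ^ d := by simp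

section CofactorVec

variable {R : Type*} [CommRing R] {d : ℕ}

/-- The generalized cross product of `d` vectors in dimension `d + 1`. -/
def cofactorVec (r : Fin d → Fin (d + 1) → R) : Fin (d + 1) → R :=
  fun j => (-1) ^ (j : ℕ) * ((Matrix.of r).submatrix id j.succAbove).det

theorem det_cons_eq_dotProduct_cofactorVec (y : Fin (d + 1) → R) (r : Fin d → Fin (d + 1) → R) :
    (Matrix.of (Fin.cons y r : Fin (d + 1) → Fin (d + 1) → R)).det = y ⬝ᵥ cofactorVec r := by
  rw [Matrix.det_succ_row_zero, dotProduct]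
  refine sum_congr rfl fun j _ => ?_
  simp only [cofactorVec]
  ring_nf
  rfl

theorem dotProduct_cofactorVec_eq_zero (r : Fin d → Fin (d + 1) → R) (i : Fin d) :
    r i ⬝ᵥ cofactorVec r = 0 := by
  rw [← det_cons_eq_dotProduct_cofactorVec]
  exact Matrix.det_zero_of_row_eq (Fin.succ_ne_zero i).symm rfl

theorem cofactorVec_map {S : Type*} [CommRing S] (f : R →+* S) (r : Fin d → Fin (d + 1) → R) :
    cofactorVec (fun i => f ∘ r i) = f ∘ cofactorVec r := by
  ext j
  simp only [cofactorVec, Function.comp_apply, map_mul, map_pow, map_neg, map_one,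
    RingHom.map_det]
  rfl

theorem cofactorVec_ne_zero {K : Type*} [Field K] {r : Fin d → Fin (d + 1) → K}
    (hr : LinearIndependent K r) : cofactorVec r ≠ 0 := by
  obtain ⟨y, hy⟩ : ∃ y, y ∉ Submodule.span K (Set.range r) := by
    by_contra! h
    have := finrank_span_eq_card hr
    rw [Submodule.eq_top_iff'.2 h, finrank_top] at this
    simp at this
  have hdet : (Matrix.of (Fin.cons y r : Fin (d + 1) → Fin (d + 1) → K)).det ≠ 0 :=
    ((Matrix.linearIndependent_rows_iff_isUnit.1 (linearIndependent_finCons.2 ⟨hr, hy⟩)).map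
      Matrix.detMonoidHom).ne_zero
  intro h
  simp [det_cons_eq_dotProduct_cofactorVec, h] at hdet

theorem abs_cofactorVec_le {r : Fin d → Fin (d + 1) → ℝ} {k : ℝ}
    (hr : ∀ i, √(∑ j, r i j ^ 2) ≤ k) (j : Fin (d + 1)) : |cofactorVec r j| ≤ k ^ d := by
  rw [cofactorVec, abs_mul, abs_pow, abs_neg, abs_one, one_pow, one_mul]
  refine Matrix.abs_det_le_pow_of_sqrt_sum_sq_le _ fun i => le_trans ?_ (hr i)
  gcongr
  rw [Fin.sum_univ_succAbove _ j]
  exact le_add_of_nonneg_left (sq_nonneg _)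

end CofactorVec

section Caratheodory

variable {𝕜 : Type*} [Field 𝕜] [LinearOrder 𝕜] [IsStrictOrderedRing 𝕜]

theorem Finset.exists_max_mul_le {ι : Type*} (s : Finset ι) {a b : ι → 𝕜}
    (ha : ∀ i ∈ s, 0 ≤ a i) (hb : ∃ i ∈ s, 0 < b i) :
    ∃ t, 0 ≤ t ∧ (∀ i ∈ s, t * b i ≤ a i) ∧ ∃ i ∈ s, 0 < b i ∧ t * b i = a i := by
  obtain ⟨i₀, hi₀, hmin⟩ := (s.filter (0 < b ·)).exists_min_image (fun i => a i / b i)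
    (by simpa [Finset.Nonempty] using hb)
  rw [mem_filter] at hi₀
  refine ⟨a i₀ / b i₀, div_nonneg (ha i₀ hi₀.1) hi₀.2.le, fun i hi => ?_,
    i₀, hi₀.1, hi₀.2, div_mul_cancel₀ _ hi₀.2.ne'⟩
  rcases le_or_gt (b i) 0 with hbi | hbi
  · exact (mul_nonpos_of_nonneg_of_nonpos (div_nonneg (ha i₀ hi₀.1) hi₀.2.le) hbi).trans (ha i hi)
  · exact (le_div_iff₀ hbi).1 (hmin i (mem_filter.2 ⟨hi, hbi⟩))

variable {E : Type*} [AddCommGroup E] [Module 𝕜 E]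

theorem exists_erase_nonneg_sum_eq [DecidableEq E] {s : Finset E}
    (hs : ¬LinearIndepOn 𝕜 id (s : Set E)) {c : E → 𝕜} (hc : ∀ g ∈ s, 0 ≤ c g) :
    ∃ g₀ ∈ s, ∃ c' : E → 𝕜, (∀ g ∈ s, 0 ≤ c' g) ∧
      ∑ g ∈ s.erase g₀, c' g • g = ∑ g ∈ s, c g • g := by
  obtain ⟨μ, hμ, hμpos⟩ : ∃ μ : E → 𝕜, ∑ g ∈ s, μ g • g = 0 ∧ ∃ g ∈ s, 0 < μ g := by
    obtain ⟨f, hf, g, hg, hfg⟩ := not_linearIndepOn_finset_iff.1 hs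
    rcases hfg.lt_or_gt with hneg | hpos
    · exact ⟨-f, by simpa [neg_smul] using hf, g, hg, by simpa using hneg⟩
    · exact ⟨f, by simpa using hf, g, hg, hpos⟩
  obtain ⟨t, -, hle, g₀, hg₀, -, heq⟩ := s.exists_max_mul_le hc hμpos
  refine ⟨g₀, hg₀, fun g => c g - t * μ g, fun g hg => sub_nonneg.2 (hle g hg), ?_⟩
  rw [sum_erase _ (by simp only [heq, sub_self, zero_smul])]
  simp only [sub_smul, mul_smul, sum_sub_distrib, ← smul_sum, hμ, smul_zero, sub_zero]

theorem exists_linearIndepOn_nonneg_sum_eq [DecidableEq E] (s : Finset E) {c : E → 𝕜}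
    (hc : ∀ g ∈ s, 0 ≤ c g) :
    ∃ t ⊆ s, LinearIndepOn 𝕜 id (t : Set E) ∧ ∃ c' : E → 𝕜, (∀ g ∈ t, 0 ≤ c' g) ∧
      ∑ g ∈ t, c' g • g = ∑ g ∈ s, c g • g := by
  induction s using Finset.strongInduction generalizing c with
  | H s ih =>
    by_cases hs : LinearIndepOn 𝕜 id (s : Set E)
    · exact ⟨s, subset_rfl, hs, c, hc, rfl⟩
    obtain ⟨g₀, hg₀, c', hc', hsum⟩ := exists_erase_nonneg_sum_eq hs hc
    obtain ⟨t, hts, ht, c'', hc'', htsum⟩ :=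
      ih _ (erase_ssubset hg₀) fun g hg => hc' g (mem_of_mem_erase hg)
    exact ⟨t, hts.trans (erase_subset _ _), ht, c'', hc'', htsum.trans hsum⟩

/-- Carathéodory's theorem for cones. -/
theorem PointedCone.exists_linearIndepOn_of_mem_hull {s : Set E} {x : E}
    (hx : x ∈ PointedCone.hull 𝕜 s) :
    ∃ t : Finset E, ↑t ⊆ s ∧ LinearIndepOn 𝕜 id (t : Set E) ∧
      ∃ c : E → 𝕜, (∀ g ∈ t, 0 ≤ c g) ∧ ∑ g ∈ t, c g • g = x := by
  classical
  obtain ⟨c, hcs, hc, rfl⟩ := PointedCone.mem_hull_set.1 hx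
  obtain ⟨t, hts, ht, c', hc', hsum⟩ :=
    exists_linearIndepOn_nonneg_sum_eq c.support (c := c) fun g _ => hc g
  exact ⟨t, (coe_subset.2 hts).trans hcs, ht, c', hc', hsum⟩

end Caratheodory

theorem Matrix.exists_ne_zero_mulVec_eq_zero_isIntegralVec {ι : Type*} [Finite ι] {d : ℕ}
    (M : Matrix ι (Fin (d + 1)) ℤ) (hrank : (M.map ((↑) : ℤ → ℝ)).rank = d) {k : ℝ}
    (hM : ∀ i, √(∑ j, (M i j : ℝ) ^ 2) ≤ k) :
    ∃ h : Fin (d + 1) → ℝ, h ≠ 0 ∧ M.map (↑) *ᵥ h = 0 ∧ IsIntegralVec h ∧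
      ∀ j, |h j| ≤ k ^ d := by
  set N := M.map ((↑) : ℤ → ℝ)
  obtain ⟨κ, a, ha, hspan, hind⟩ := exists_linearIndependent' ℝ N.row
  have : Fintype κ := have := Finite.of_injective a ha; Fintype.ofFinite κ
  have hcard : Fintype.card κ = d := by
    rw [← finrank_span_eq_card hind, hspan, ← Matrix.rank_eq_finrank_span_row, hrank]
  let σ : Fin d → ι := a ∘ (Fintype.equivFinOfCardEq hcard).symm
  have hσ : LinearIndependent ℝ (fun i => N (σ i)) :=
    hind.comp _ (Fintype.equivFinOfCardEq hcard).symm.injective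
  have hσspan : ∀ i, N i ∈ Submodule.span ℝ (Set.range fun l => N (σ l)) := by
    intro i
    rw [show Set.range (fun l => N (σ l)) = Set.range (N.row ∘ a) from
      (Fintype.equivFinOfCardEq hcard).symm.surjective.range_comp (N.row ∘ a), hspan]
    exact Submodule.subset_span ⟨i, rfl⟩
  have hcast : cofactorVec (fun l => N (σ l)) = (↑) ∘ cofactorVec (fun l => M (σ l)) :=
    cofactorVec_map (Int.castRingHom ℝ) _
  refine ⟨cofactorVec (fun l => N (σ l)), cofactorVec_ne_zero hσ, ?_, ?_, ?_⟩
  · ext i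
    obtain ⟨c, hc⟩ := (Submodule.mem_span_range_iff_exists_fun ℝ).1 (hσspan i)
    have horth := dotProduct_cofactorVec_eq_zero fun l => N (σ l)
    simp only [Matrix.mulVec, Pi.zero_apply, ← hc, sum_dotProduct, smul_dotProduct, horth,
      smul_zero, sum_const_zero]
  · exact fun j => ⟨_, congrFun hcast j⟩
  · exact abs_cofactorVec_le fun l => hM (σ l)

section KernelCone

variable {m n : ℕ} (A : Matrix (Fin m) (Fin n) ℤ)

def kernelCone : Set (Fin n → ℝ) :=
  {v | A.map (↑) *ᵥ v = 0 ∧ 0 ≤ v}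

def integralGenerators (b : ℝ) : Set (Fin n → ℝ) :=
  {g | g ∈ kernelCone A ∧ IsIntegralVec g ∧ ∀ j, g j ≤ b}

def supportConstraints (J : Finset (Fin n)) : Matrix (Fin m ⊕ Fin n) (Fin n) ℤ :=
  fromRows A (diagonal fun j => if j ∈ J then 0 else 1)

variable {A}

theorem mulVec_supportConstraints_eq_zero_iff {J : Finset (Fin n)} {w : Fin n → ℝ} :
    (supportConstraints A J).map (↑) *ᵥ w = 0 ↔ A.map (↑) *ᵥ w = 0 ∧ ∀ j ∉ J, w j = 0 := by
  rw [supportConstraints, fromRows_map, fromRows_mulVec, diagonal_map (by simp)]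
  simp only [funext_iff, Sum.forall, Sum.elim_inl, Sum.elim_inr, Pi.zero_apply, mulVec_diagonal]
  simp

theorem sqrt_sum_sq_supportConstraints_le {k : ℝ} (hk : 1 ≤ k)
    (hA : ∀ i, √(∑ j, (A i j : ℝ) ^ 2) ≤ k) (J : Finset (Fin n)) (i : Fin m ⊕ Fin n) :
    √(∑ j, (supportConstraints A J i j : ℝ) ^ 2) ≤ k := by
  rcases i with i | i
  · exact hA i
  · simp only [supportConstraints, fromRows_apply_inr, diagonal_apply]
    split_ifs <;> simp [hk, zero_le_one.trans hk]

theorem exists_sub_smul_mem_kernelCone {v u : Fin n → ℝ} (hv : v ∈ kernelCone A)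
    (hu : A.map (↑) *ᵥ u = 0) (huv : ∀ j, v j = 0 → u j = 0) (hpos : ∃ j, 0 < u j) :
    ∃ t : ℝ, 0 < t ∧ v - t • u ∈ kernelCone A ∧ ∃ i, v i ≠ 0 ∧ (v - t • u) i = 0 := by
  obtain ⟨t, ht, hle, i, -, hi, heq⟩ :=
    univ.exists_max_mul_le (a := v) (b := u) (fun j _ => hv.2 j) (by simpa using hpos)
  have hvi : v i ≠ 0 := fun h => hi.ne' (huv i h)
  refine ⟨t, ht.lt_of_ne ?_, ⟨?_, fun j => ?_⟩, i, hvi, ?_⟩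
  · rintro rfl
    exact hvi (by simpa using heq.symm)
  · rw [mulVec_sub, mulVec_smul, hv.1, hu, smul_zero, sub_zero]
  · simpa [sub_nonneg] using hle j (mem_univ j)
  · simp [heq]

theorem exists_mulVec_eq_zero_apply_eq_zero_of_ne_smul {v w : Fin n → ℝ}
    (hv : A.map (↑) *ᵥ v = 0) (hw : A.map (↑) *ᵥ w = 0) (hwv : ∀ j, v j = 0 → w j = 0)
    (hwc : ∀ c : ℝ, w ≠ c • v) {j₀ : Fin n} (hj₀ : v j₀ ≠ 0) :
    ∃ u : Fin n → ℝ, A.map (↑) *ᵥ u = 0 ∧ (∀ j, v j = 0 → u j = 0) ∧ u j₀ = 0 ∧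
      ∃ j, 0 < u j := by
  set u := v j₀ • w - w j₀ • v
  have huA : A.map (↑) *ᵥ u = 0 := by
    rw [mulVec_sub, mulVec_smul, mulVec_smul, hw, hv, smul_zero, smul_zero, sub_zero]
  have huv : ∀ j, v j = 0 → u j = 0 := fun j hj => by simp [u, hj, hwv j hj]
  have huj₀ : u j₀ = 0 := by simp [u, mul_comm]
  have hu0 : u ≠ 0 := by
    intro h
    refine hwc (w j₀ / v j₀) (funext fun j => ?_)
    have := congrFun h j
    simp only [u, Pi.sub_apply, Pi.smul_apply, smul_eq_mul, Pi.zero_apply] at this ⊢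
    field_simp
    linarith
  obtain ⟨j, hj⟩ : ∃ j, u j ≠ 0 := Function.ne_iff.1 hu0
  rcases hj.lt_or_gt with hj | hj
  · exact ⟨-u, by rw [mulVec_neg, huA, neg_zero], fun i hi => by simp [huv i hi],
      by simp [huj₀], j, by simpa using hj⟩
  · exact ⟨u, huA, huv, huj₀, j, hj⟩

variable {C : Finset (Fin n × Fin n)} {x : Fin n → ℝ}

theorem IsSolution.mem_kernelCone (hx : IsSolution A C x) : x ∈ kernelCone A :=
  ⟨funext hx.1, hx.2.1⟩

theorem IsSolution.of_le {y : Fin n → ℝ} (hx : IsSolution A C x) (hy : y ∈ kernelCone A)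
    (hyx : y ≤ x) : IsSolution A C y := by
  refine ⟨congrFun hy.1, hy.2, fun p hp => ?_⟩
  have hzero : ∀ j, x j = 0 → y j = 0 := fun j h => le_antisymm (h ▸ hyx j) (hy.2 j)
  exact (hx.2.2 p hp).imp (hzero _) (hzero _)

theorem IsFundamental.eq_of_le {g : Fin n → ℝ} (hx : IsFundamental A C x)
    (hg : g ∈ kernelCone A) (hgint : IsIntegralVec g) (hg0 : g ≠ 0) (hgx : g ≤ x) : g = x := by
  by_contra hne
  have hxg : x - g ∈ kernelCone A :=
    ⟨by rw [mulVec_sub, hx.1.mem_kernelCone.1, hg.1, sub_zero], sub_nonneg.2 hgx⟩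
  refine hx.2.2 ⟨g, x - g, hx.1.of_le hg hgx, hgint, hx.1.of_le hxg (sub_le_self _ hg.2),
    fun j => ?_, hg0, sub_ne_zero.2 (Ne.symm hne), by abel⟩
  obtain ⟨a, ha⟩ := hx.2.1 j
  obtain ⟨b, hb⟩ := hgint j
  exact ⟨a - b, by simp [ha, hb]⟩


end KernelCone

section IntegralDecomposition

variable {m d : ℕ} {A : Matrix (Fin m) (Fin (d + 1)) ℤ}
  {C : Finset (Fin (d + 1) × Fin (d + 1))} {x : Fin (d + 1) → ℝ}

theorem mem_hull_integralGenerators_of_ker_eq_span {k : ℝ} (hk : 1 ≤ k)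
    (hA : ∀ i, √(∑ j, (A i j : ℝ) ^ 2) ≤ k) {J : Finset (Fin (d + 1))} {v : Fin (d + 1) → ℝ}
    (hv : v ∈ kernelCone A) (hv0 : v ≠ 0) (hvJ : ∀ j ∉ J, v j = 0)
    (hker : ∀ w, A.map (↑) *ᵥ w = 0 → (∀ j ∉ J, w j = 0) → ∃ c : ℝ, w = c • v) :
    v ∈ PointedCone.hull ℝ (integralGenerators A (k ^ d)) := by
  set N := (supportConstraints A J).map ((↑) : ℤ → ℝ)
  have hkerN : LinearMap.ker N.mulVecLin = Submodule.span ℝ {v} := by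
    refine le_antisymm (fun w hw => ?_) ?_
    · obtain ⟨c, rfl⟩ := hker w (mulVec_supportConstraints_eq_zero_iff.1 hw).1
        (mulVec_supportConstraints_eq_zero_iff.1 hw).2
      exact Submodule.smul_mem _ c (Submodule.mem_span_singleton_self v)
    · exact (Submodule.span_singleton_le_iff_mem _ _).2
        (mulVec_supportConstraints_eq_zero_iff.2 ⟨hv.1, hvJ⟩)
  have hrank : N.rank = d := by
    have := LinearMap.finrank_range_add_finrank_ker N.mulVecLin
    rw [hkerN, finrank_span_singleton hv0, Module.finrank_fin_fun] at this
    exact Nat.add_right_cancel this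
  obtain ⟨h, hh0, hNh, hhint, hhk⟩ :=
    (supportConstraints A J).exists_ne_zero_mulVec_eq_zero_isIntegralVec hrank
      (sqrt_sum_sq_supportConstraints_le hk hA J)
  obtain ⟨hAh, hhJ⟩ := mulVec_supportConstraints_eq_zero_iff.1 hNh
  obtain ⟨c, rfl⟩ := hker h hAh hhJ
  obtain ⟨g, hg, a, ha, rfl⟩ : ∃ g ∈ integralGenerators A (k ^ d), ∃ a : ℝ, 0 < a ∧ a • g = v := by
    have hc : c ≠ 0 := by rintro rfl; simp at hh0
    rcases hc.lt_or_gt with hc | hc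
    · refine ⟨-(c • v), ⟨⟨?_, ?_⟩, ?_, ?_⟩, -c⁻¹, by simpa using hc, by simp [smul_smul, hc.ne]⟩
      · rw [mulVec_neg, hAh, neg_zero]
      · rw [← neg_smul]
        exact smul_nonneg (neg_nonneg.2 hc.le) hv.2
      · exact fun j => (hhint j).elim fun z hz => ⟨-z, by simp [hz]⟩
      · exact fun j => (neg_le_abs _).trans (hhk j)
    · refine ⟨c • v, ⟨⟨hAh, ?_⟩, hhint, fun j => (le_abs_self _).trans (hhk j)⟩, c⁻¹,
        inv_pos.2 hc, by simp [smul_smul, hc.ne']⟩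
      exact smul_nonneg hc.le hv.2
  exact PointedCone.smul_mem _ ha.le (PointedCone.subset_hull hg)

theorem mem_hull_integralGenerators {k : ℝ} (hk : 1 ≤ k)
    (hA : ∀ i, √(∑ j, (A i j : ℝ) ^ 2) ≤ k) {v : Fin (d + 1) → ℝ} (hv : v ∈ kernelCone A) :
    v ∈ PointedCone.hull ℝ (integralGenerators A (k ^ d)) := by
  classical
  induction hN : #{j | v j ≠ 0} using Nat.strong_induction_on generalizing v with
  | _ N ih =>
  subst hN
  have hsmaller : ∀ w ∈ kernelCone A, (∀ j, v j = 0 → w j = 0) → (∃ i, v i ≠ 0 ∧ w i = 0) →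
      w ∈ PointedCone.hull ℝ (integralGenerators A (k ^ d)) := by
    rintro w hw hwv ⟨i, hvi, hwi⟩
    refine ih _ (card_lt_card ⟨fun j => by simpa using mt (hwv j), fun h => ?_⟩) hw rfl
    exact (by simpa using h (by simpa using hvi) : w i ≠ 0) hwi
  rcases eq_or_ne v 0 with rfl | hv0
  · exact zero_mem _
  by_cases hker : ∀ w, A.map (↑) *ᵥ w = 0 → (∀ j ∉ ({j | v j ≠ 0} : Finset _), w j = 0) →
      ∃ c : ℝ, w = c • v
  · exact mem_hull_integralGenerators_of_ker_eq_span hk hA hv hv0 (by simp) hker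
  push Not at hker
  obtain ⟨w, hwA, hwv, hwc⟩ := hker
  simp only [mem_filter, mem_univ, true_and, not_not] at hwv
  obtain ⟨j₀, hj₀⟩ : ∃ j, v j ≠ 0 := Function.ne_iff.1 hv0
  obtain ⟨u, huA, huv, huj₀, hupos⟩ :=
    exists_mulVec_eq_zero_apply_eq_zero_of_ne_smul hv.1 hwA hwv hwc hj₀
  obtain ⟨t, ht, hv₁, hsupp₁⟩ := exists_sub_smul_mem_kernelCone hv huA huv hupos
  have h₁ := hsmaller _ hv₁ (fun j hj => by simp [hj, huv j hj]) hsupp₁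
  by_cases hneg : ∃ j, u j < 0
  · obtain ⟨t', ht', hv₂, hsupp₂⟩ := exists_sub_smul_mem_kernelCone hv
      (by rw [mulVec_neg, huA, neg_zero]) (fun j hj => by simp [huv j hj]) (by simpa using hneg)
    have h₂ := hsmaller _ hv₂ (fun j hj => by simp [hj, huv j hj]) hsupp₂
    have hcomb : v = (t' / (t + t')) • (v - t • u) + (t / (t + t')) • (v - t' • -u) := by
      ext j
      simp only [Pi.add_apply, Pi.smul_apply, Pi.sub_apply, Pi.neg_apply, smul_eq_mul]
      field_simp
      ring
    rw [hcomb]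
    exact add_mem (PointedCone.smul_mem _ (by positivity) h₁)
      (PointedCone.smul_mem _ (by positivity) h₂)
  · push Not at hneg
    rw [show v = (v - t • u) + t • u by abel]
    exact add_mem h₁ (PointedCone.smul_mem _ ht.le (hsmaller u ⟨huA, hneg⟩ huv ⟨j₀, hj₀, huj₀⟩))

theorem IsFundamental.apply_le_mul_pow {k : ℝ} (hk : 1 ≤ k)
    (hA : ∀ i, √(∑ j, (A i j : ℝ) ^ 2) ≤ k) (hx : IsFundamental A C x) (j : Fin (d + 1)) :
    x j ≤ (d + 1) * k ^ d := by
  obtain ⟨t, htG, ht, c, hc, hxt⟩ := PointedCone.exists_linearIndepOn_of_mem_hull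
    (mem_hull_integralGenerators hk hA hx.1.mem_kernelCone)
  have hcard : #t ≤ d + 1 := by
    simpa using (finrank_span_finset_eq_card ht).symm.trans_le (Submodule.finrank_le _)
  have hgnn : ∀ g ∈ t, 0 ≤ g := fun g hg => (htG hg).1.2
  have hxj : x j = ∑ g ∈ t, c g * g j := by simp [← hxt, Finset.sum_apply]
  have hkd : 0 ≤ k ^ d := pow_nonneg (zero_le_one.trans hk) d
  by_cases hbig : ∃ g ∈ t, 1 ≤ c g
  · -- a generator with coefficient `≥ 1` splits off `x`, so by fundamentality it is `x` itself
    obtain ⟨g, hg, hcg⟩ := hbig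
    have hgx : g ≤ x := fun i => by
      calc g i ≤ c g * g i := le_mul_of_one_le_left (hgnn g hg i) hcg
        _ ≤ x i := by
          rw [← hxt, Finset.sum_apply]
          exact single_le_sum (f := fun g => (c g • g) i)
            (fun g' hg' => mul_nonneg (hc g' hg') (hgnn g' hg' i)) hg
    calc x j = g j := by rw [hx.eq_of_le (htG hg).1 (htG hg).2.1 (ht.ne_zero hg) hgx]
      _ ≤ k ^ d := (htG hg).2.2 j
      _ ≤ (d + 1) * k ^ d := le_mul_of_one_le_left hkd (by linarith [d.cast_nonneg (α := ℝ)])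
  · push Not at hbig
    calc x j = ∑ g ∈ t, c g * g j := hxj
      _ ≤ ∑ _g ∈ t, k ^ d := sum_le_sum fun g hg =>
          (mul_le_of_le_one_left (hgnn g hg j) (hbig g hg).le).trans ((htG hg).2.2 j)
      _ = #t * k ^ d := by rw [sum_const, nsmul_eq_mul]
      _ ≤ (d + 1) * k ^ d := by gcongr; exact_mod_cast hcard

end IntegralDecomposition

theorem fundamental_solution_coord_bound_general {m n : ℕ}
    (A : Matrix (Fin m) (Fin n) ℤ) (C : Finset (Fin n × Fin n))
    (k : ℝ) (hk : 1 ≤ k)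
    (hA : ∀ i : Fin m, Real.sqrt (∑ j : Fin n, ((A i j : ℝ)) ^ 2) ≤ k)
    (x : Fin n → ℝ) (hx : IsFundamental A C x) (j : Fin n) :
    x j ≤ (n : ℝ) ^ ((3 : ℝ) / 2) * k ^ (n - 1) := by
  obtain ⟨d, rfl⟩ := Nat.exists_eq_add_one_of_ne_zero j.pos.ne'
  have hn : (1 : ℝ) ≤ (d + 1 : ℕ) := by exact_mod_cast Nat.le_add_left 1 d
  calc x j ≤ (d + 1) * k ^ d := hx.apply_le_mul_pow hk hA j
    _ ≤ ((d + 1 : ℕ) : ℝ) ^ ((3 : ℝ) / 2) * k ^ (d + 1 - 1) := by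
      rw [Nat.add_sub_cancel]
      gcongr
      exact_mod_cast Real.self_le_rpow_of_one_le hn (by norm_num)

/-- Theorem 8.1(2): if every row of `A` has ℓ² norm at most `k ≥ 1`, then every
coordinate of every fundamental solution to the system Σ is at most `n^(3/2) * k^(n-1)`. -/
theorem fundamental_solution_coord_bound {m n : ℕ} (hm : 0 < m) (hn : 0 < n)
    (A : Matrix (Fin m) (Fin n) ℤ) (C : Finset (Fin n × Fin n))
    (k : ℝ) (hk : 1 ≤ k)
    (hA : ∀ i : Fin m, Real.sqrt (∑ j : Fin n, ((A i j : ℝ)) ^ 2) ≤ k)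
    (x : Fin n → ℝ) (hx : IsFundamental A C x) (j : Fin n) :
    x j ≤ (n : ℝ) ^ ((3 : ℝ) / 2) * k ^ (n - 1) :=
  fundamental_solution_coord_bound_general A C k hk hA x hx j
end

section
/- Every solution x ∈ ℝⁿ to the system Σ can be written as a nonnegative linear combination of at most n vertex solutions: there exist an integer m' with 0 ≤ m' ≤ n, nonnegative real numbers λ_1, …, λ_{m'}, and vertex solutions v_1, …, v_{m'} to Σ such that x = λ_1·v_1 + ⋯ + λ_{m'}·v_{m'}. -/
open Finset Module Matrix

section ConicCaratheodory

variable {𝕜 E : Type*} [Field 𝕜] [LinearOrder 𝕜] [IsStrictOrderedRing 𝕜]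

lemma exists_min_ratio {ι : Type*} [Fintype ι] (a b : ι → 𝕜) (hb : ∃ j, 0 < b j) :
    ∃ t : 𝕜, (∀ j, 0 < b j → t * b j ≤ a j) ∧ ∃ j, 0 < b j ∧ t * b j = a j := by
  classical
  obtain ⟨j₀, hj₀, hmin⟩ := (univ.filter fun j => 0 < b j).exists_min_image
    (fun j => a j / b j) (by simpa [Finset.Nonempty] using hb)
  simp only [mem_filter, mem_univ, true_and] at hj₀ hmin
  exact ⟨a j₀ / b j₀, fun j hj => (le_div_iff₀ hj).mp (hmin j hj), j₀, hj₀,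
    div_mul_cancel₀ _ hj₀.ne'⟩

lemma exists_nonneg_sub_smul_eq_zero {ι : Type*} [Fintype ι] {a b : ι → 𝕜} (ha : 0 ≤ a)
    (hb : ∃ j, 0 < b j) : ∃ t : 𝕜, 0 ≤ t ∧ 0 ≤ a - t • b ∧ ∃ j, 0 < b j ∧ (a - t • b) j = 0 := by
  obtain ⟨t, hle, j₀, hj₀, heq⟩ := exists_min_ratio a b hb
  have ht : 0 ≤ t := nonneg_of_mul_nonneg_left (heq ▸ ha j₀) hj₀
  refine ⟨t, ht, fun j => ?_, j₀, hj₀, by simp [heq]⟩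
  rcases lt_or_ge 0 (b j) with hj | hj
  · simpa using hle j hj
  · simpa using (mul_nonpos_of_nonneg_of_nonpos ht hj).trans (ha j)

variable [AddCommGroup E] [Module 𝕜 E]

lemma exists_nonneg_coeffs_eq_zero_of_not_linearIndependent {ι : Type*} [Fintype ι]
    {v : ι → E} (hv : ¬LinearIndependent 𝕜 v) {lam : ι → 𝕜} (hlam : 0 ≤ lam) :
    ∃ lam' : ι → 𝕜, 0 ≤ lam' ∧ (∃ i, lam' i = 0) ∧ ∑ i, lam' i • v i = ∑ i, lam i • v i := by
  obtain ⟨c, hc, i₀, hi₀⟩ := Fintype.not_linearIndependent_iff.mp hv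
  obtain ⟨c, hc, hpos⟩ : ∃ c : ι → 𝕜, ∑ i, c i • v i = 0 ∧ ∃ i, 0 < c i := by
    rcases hi₀.lt_or_gt with h | h
    · exact ⟨-c, by simp [hc], i₀, by simpa using h⟩
    · exact ⟨c, hc, i₀, h⟩
  obtain ⟨t, -, hnn, i, -, hi⟩ := exists_nonneg_sub_smul_eq_zero hlam hpos
  refine ⟨lam - t • c, hnn, ⟨i, hi⟩, ?_⟩
  simp [sub_smul, Finset.sum_sub_distrib, mul_smul, ← Finset.smul_sum, hc]

theorem exists_nonneg_comb_card_le_finrank [FiniteDimensional 𝕜 E] {s : Set E} {N : ℕ}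
    (lam : Fin N → 𝕜) (v : Fin N → E) (hlam : 0 ≤ lam) (hv : ∀ i, v i ∈ s) :
    ∃ M ≤ finrank 𝕜 E, ∃ (mu : Fin M → 𝕜) (w : Fin M → E),
      0 ≤ mu ∧ (∀ i, w i ∈ s) ∧ ∑ i, mu i • w i = ∑ i, lam i • v i := by
  induction N with
  | zero => exact ⟨0, Nat.zero_le _, lam, v, hlam, hv, rfl⟩
  | succ N ih =>
    by_cases hN : N + 1 ≤ finrank 𝕜 E
    · exact ⟨_, hN, lam, v, hlam, hv, rfl⟩
    have hdep : ¬LinearIndependent 𝕜 v := fun h => hN (by simpa using h.fintype_card_le_finrank)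
    obtain ⟨lam', hlam', ⟨i, hi⟩, hsum⟩ :=
      exists_nonneg_coeffs_eq_zero_of_not_linearIndependent hdep hlam
    obtain ⟨M, hM, mu, w, hmu, hw, hsum'⟩ :=
      ih (lam' ∘ i.succAbove) (v ∘ i.succAbove) (fun j => hlam' _) (fun j => hv _)
    refine ⟨M, hM, mu, w, hmu, hw, ?_⟩
    rw [hsum', ← hsum, Fin.sum_univ_succAbove _ i, hi, zero_smul, zero_add]
    rfl

theorem PointedCone.exists_nonneg_comb_card_le_finrank_of_mem_hull [FiniteDimensional 𝕜 E]
    {s : Set E} {x : E} (hx : x ∈ PointedCone.hull 𝕜 s) :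
    ∃ M ≤ finrank 𝕜 E, ∃ (mu : Fin M → 𝕜) (w : Fin M → E),
      0 ≤ mu ∧ (∀ i, w i ∈ s) ∧ x = ∑ i, mu i • w i := by
  obtain ⟨N, c, v, rfl⟩ := Submodule.mem_span_set'.mp hx
  obtain ⟨M, hM, mu, w, hmu, hw, hsum⟩ :=
    exists_nonneg_comb_card_le_finrank (fun i => (c i : 𝕜)) (fun i => (v i : E))
      (fun i => (c i).2) (fun i => (v i).2)
  exact ⟨M, hM, mu, w, hmu, hw, hsum.symm⟩

end ConicCaratheodory

-- Over an ordered field `BᵀB` has the same kernel as `B`; being square, that kernel is detected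
-- by a determinant, which `f` preserves.
lemma Matrix.exists_ne_zero_mulVec_eq_zero_of_map {K L ι κ : Type*} [Field K] [LinearOrder K]
    [IsStrictOrderedRing K] [Field L] [Fintype ι] [Fintype κ] [DecidableEq κ] (f : K →+* L)
    (B : Matrix ι κ K) {v : κ → L} (hv : v ≠ 0) (h : B.map f *ᵥ v = 0) :
    ∃ q : κ → K, q ≠ 0 ∧ B *ᵥ q = 0 := by
  have hdetL : ((Bᵀ * B).map f).det = 0 := by
    rw [← exists_mulVec_eq_zero_iff, Matrix.map_mul, transpose_map]
    exact ⟨v, hv, by rw [← mulVec_mulVec, h, mulVec_zero]⟩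
  have hdetK : (Bᵀ * B).det = 0 := by
    rwa [← RingHom.mapMatrix_apply, ← RingHom.map_det, map_eq_zero] at hdetL
  obtain ⟨q, hq0, hq⟩ := exists_mulVec_eq_zero_iff.mpr hdetK
  exact ⟨q, hq0, (SetLike.ext_iff.mp (ker_mulVecLin_transpose_mul_self B) q).mp hq⟩

lemma Rat.exists_pos_mul_eq_intCast {ι : Type*} [Fintype ι] (q : ι → ℚ) :
    ∃ D : ℚ, 0 < D ∧ ∃ w : ι → ℤ, ∀ j, (w j : ℚ) = D * q j := by
  classical
  refine ⟨∏ j, ((q j).den : ℚ), by positivity,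
    fun j => (∏ i ∈ univ.erase j, ((q i).den : ℤ)) * (q j).num, fun j => ?_⟩
  rw [← Finset.prod_erase_mul _ _ (mem_univ j), mul_assoc, Rat.den_mul_eq_num]
  push_cast
  rfl

lemma Int.exists_gcd_eq_one_and_eq_pos_smul {ι : Type*} [Fintype ι] {w : ι → ℤ} (hw : w ≠ 0) :
    ∃ g : ℤ, 0 < g ∧ ∃ u : ι → ℤ, univ.gcd u = 1 ∧ w = g • u := by
  obtain ⟨j, hj⟩ := Function.ne_iff.mp hw
  obtain ⟨u, hu, hgcd⟩ := Finset.extract_gcd w ⟨j, mem_univ j⟩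
  have hg0 : univ.gcd w ≠ 0 := fun h => hj (Finset.gcd_eq_zero_iff.mp h j (mem_univ j))
  exact ⟨_, (Int.nonneg_of_normalize_eq_self Finset.normalize_gcd).lt_of_ne' hg0, u, hgcd,
    funext fun i => hu i (mem_univ i)⟩

lemma Rat.exists_primitive_int_eq_pos_mul {ι : Type*} [Fintype ι] {q : ι → ℚ}
    (hq : q ≠ 0) : ∃ r : ℚ, 0 < r ∧ ∃ u : ι → ℤ, univ.gcd u = 1 ∧ ∀ j, (u j : ℚ) = r * q j := by
  obtain ⟨D, hD, w, hw⟩ := Rat.exists_pos_mul_eq_intCast q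
  have hw0 : w ≠ 0 := by
    obtain ⟨j, hj⟩ := Function.ne_iff.mp hq
    exact Function.ne_iff.mpr ⟨j, fun h => hj <| by simpa [h, hD.ne'] using (hw j).symm⟩
  obtain ⟨g, hg, u, hu, rfl⟩ := Int.exists_gcd_eq_one_and_eq_pos_smul hw0
  refine ⟨D / g, by positivity, u, hu, fun j => ?_⟩
  have hgQ : (g : ℚ) ≠ 0 := by exact_mod_cast hg.ne'
  rw [div_mul_eq_mul_div, ← hw j, eq_div_iff hgQ]
  simp [mul_comm]

lemma ncard_support_lt {ι M : Type*} [Finite ι] [Zero M] {x y : ι → M}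
    (hy : ∀ j, x j = 0 → y j = 0) {j : ι} (hxj : x j ≠ 0) (hyj : y j = 0) :
    (Function.support y).ncard < (Function.support x).ncard :=
  Set.ncard_lt_ncard ⟨fun i hi => mt (hy i) hi, fun h => h hxj hyj⟩ (Set.toFinite _)

noncomputable def faceMatrix {m n : ℕ} (A : Matrix (Fin m) (Fin n) ℤ) (x : Fin n → ℝ) :
    Matrix (Fin m ⊕ Fin n) (Fin n) ℤ :=
  fromRows A (diagonal fun j => if x j = 0 then 1 else 0)

-- For a solution `x`, this is the linear span of the smallest face of `{y ≥ 0 | A y = 0}`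
-- containing `x`; so `x ≠ 0` spans an extreme ray exactly when `faceSpace A x ≤ ℝ ∙ x`.
noncomputable def faceSpace {m n : ℕ} (A : Matrix (Fin m) (Fin n) ℤ) (x : Fin n → ℝ) :
    Submodule ℝ (Fin n → ℝ) :=
  LinearMap.ker ((faceMatrix A x).map (Int.cast : ℤ → ℝ)).mulVecLin

section Solutions

variable {m n : ℕ} {A : Matrix (Fin m) (Fin n) ℤ} {C : Finset (Fin n × Fin n)} {x d : Fin n → ℝ}

lemma mem_faceSpace :
    d ∈ faceSpace A x ↔ (∀ i, ∑ j, (A i j : ℝ) * d j = 0) ∧ ∀ j, x j = 0 → d j = 0 := by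
  simp only [faceSpace, faceMatrix, LinearMap.mem_ker, mulVecLin_apply, fromRows_map,
    fromRows_mulVec]
  rw [← Sum.elim_zero_zero]
  simp only [funext_iff, Sum.forall, Sum.elim_inl, Sum.elim_inr, diagonal_map Int.cast_zero,
    mulVec_diagonal]
  refine and_congr Iff.rfl (forall_congr' fun j => ?_)
  split_ifs with h <;> simp [h]

lemma faceSpace_smul {c : ℝ} (hc : c ≠ 0) : faceSpace A (c • x) = faceSpace A x := by
  ext d
  simp [mem_faceSpace, hc]

lemma exists_rat_mem_faceSpace (h : faceSpace A x ≠ ⊥) :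
    ∃ q : Fin n → ℚ, q ≠ 0 ∧ (fun j => (q j : ℝ)) ∈ faceSpace A x := by
  obtain ⟨v, hv, hv0⟩ := (Submodule.ne_bot_iff _).mp h
  have hmap : ((faceMatrix A x).map (Int.cast : ℤ → ℚ)).map (Rat.castHom ℝ) =
      (faceMatrix A x).map (Int.cast : ℤ → ℝ) := by
    ext; simp
  rw [faceSpace, LinearMap.mem_ker, mulVecLin_apply, ← hmap] at hv
  obtain ⟨q, hq0, hq⟩ := exists_ne_zero_mulVec_eq_zero_of_map (Rat.castHom ℝ) _ hv0 hv
  refine ⟨q, hq0, ?_⟩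
  rw [faceSpace, LinearMap.mem_ker, mulVecLin_apply, ← hmap]
  ext i
  exact (RingHom.map_mulVec (Rat.castHom ℝ) _ q i).symm.trans (by simp [hq])

lemma IsSolution.self_mem_faceSpace (hx : IsSolution A C x) : x ∈ faceSpace A x :=
  mem_faceSpace.mpr ⟨hx.1, fun _ h => h⟩

lemma IsSolution.of_mem_faceSpace (hx : IsSolution A C x) (hd : d ∈ faceSpace A x)
    (hd0 : 0 ≤ d) : IsSolution A C d :=
  ⟨(mem_faceSpace.mp hd).1, hd0,
    fun p hp => (hx.2.2 p hp).imp ((mem_faceSpace.mp hd).2 _) ((mem_faceSpace.mp hd).2 _)⟩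

lemma IsSolution.smul (hx : IsSolution A C x) {t : ℝ} (ht : 0 ≤ t) : IsSolution A C (t • x) :=
  hx.of_mem_faceSpace (Submodule.smul_mem _ t hx.self_mem_faceSpace) (smul_nonneg ht hx.2.1)

lemma mem_faceSpace_of_smul_eq_add {y z : Fin n → ℝ} (hy : IsSolution A C y)
    (hz : IsSolution A C z) {k : ℝ} (h : k • x = y + z) : y ∈ faceSpace A x := by
  refine mem_faceSpace.mpr ⟨hy.1, fun j hj => ?_⟩
  have hyz : y j + z j = 0 := by simpa [hj] using (congrFun h j).symm
  linarith [hy.2.1 j, hz.2.1 j]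

lemma isVertexSolution_of_faceSpace_le {u : Fin n → ℤ} (hu : univ.gcd u = 1)
    (hsol : IsSolution A C fun j => (u j : ℝ))
    (hF : faceSpace A (fun j => (u j : ℝ)) ≤ ℝ ∙ fun j => (u j : ℝ)) :
    IsVertexSolution A C fun j => (u j : ℝ) := by
  refine ⟨hsol, fun j => ⟨u j, rfl⟩, fun k _ y z hy hz h => ?_, ?_⟩
  · obtain ⟨a, ha⟩ := Submodule.mem_span_singleton.mp (hF (mem_faceSpace_of_smul_eq_add hy hz h))
    obtain ⟨b, hb⟩ := Submodule.mem_span_singleton.mp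
      (hF (mem_faceSpace_of_smul_eq_add hz hy (h.trans (add_comm y z))))
    exact ⟨⟨a, ha.symm⟩, ⟨b, hb.symm⟩⟩
  · rintro ⟨k, y, hk, -, hy, hu_eq⟩
    have hdvd : k ∣ univ.gcd u := Finset.dvd_gcd fun j _ => by
      obtain ⟨z, hz⟩ := hy j
      have : (u j : ℝ) = k * z := by simpa [hz] using congrFun hu_eq j
      exact ⟨z, by exact_mod_cast this⟩
    rw [hu] at hdvd
    linarith [Int.le_of_dvd one_pos hdvd]

lemma IsSolution.exists_isVertexSolution_smul_eq (hx : IsSolution A C x) (hx0 : x ≠ 0)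
    (hF : faceSpace A x ≤ ℝ ∙ x) : ∃ t : ℝ, 0 ≤ t ∧ ∃ v, IsVertexSolution A C v ∧ x = t • v := by
  obtain ⟨q, hq0, hqF⟩ := exists_rat_mem_faceSpace <|
    (Submodule.ne_bot_iff _).mpr ⟨x, hx.self_mem_faceSpace, hx0⟩
  obtain ⟨c, hc⟩ := Submodule.mem_span_singleton.mp (hF hqF)
  obtain ⟨q, c, hc_pos, hq0, hqx⟩ : ∃ (q : Fin n → ℚ) (c : ℝ), 0 < c ∧ q ≠ 0 ∧
      ∀ j, (q j : ℝ) = c * x j := by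
    have hc0 : c ≠ 0 := by
      rintro rfl
      exact hq0 (funext fun j => by simpa using (congrFun hc j).symm)
    rcases hc0.lt_or_gt with hneg | hpos
    · exact ⟨-q, -c, neg_pos.mpr hneg, neg_ne_zero.mpr hq0,
        fun j => by simp [← congrFun hc j]⟩
    · exact ⟨q, c, hpos, hq0, fun j => by simp [← congrFun hc j]⟩
  obtain ⟨r, hr, u, hu, hur⟩ := Rat.exists_primitive_int_eq_pos_mul hq0
  have hrc : (0 : ℝ) < r * c := mul_pos (by exact_mod_cast hr) hc_pos
  have hv : (fun j => (u j : ℝ)) = (r * c : ℝ) • x := by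
    ext j
    rw [Pi.smul_apply, smul_eq_mul, mul_assoc, ← hqx]
    exact_mod_cast hur j
  refine ⟨(r * c)⁻¹, by positivity, _, isVertexSolution_of_faceSpace_le hu ?_ ?_, ?_⟩
  · exact hv ▸ hx.smul hrc.le
  · rwa [hv, faceSpace_smul hrc.ne', Submodule.span_singleton_smul_eq hrc.ne'.isUnit]
  · rw [hv, smul_smul, inv_mul_cancel₀ hrc.ne', one_smul]

lemma IsSolution.exists_nonneg_mem_faceSpace (hx : IsSolution A C x)
    (hF : ¬faceSpace A x ≤ ℝ ∙ x) :
    ∃ w ∈ faceSpace A x, 0 ≤ w ∧ w ≠ 0 ∧ ∃ j, x j ≠ 0 ∧ w j = 0 := by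
  obtain ⟨d, hdF, hdx⟩ := SetLike.not_le_iff_exists.mp hF
  have hd_supp := (mem_faceSpace.mp hdF).2
  have hx_pos : ∃ j, 0 < x j := by
    by_contra! h
    refine hdx ((funext fun j => hd_supp j (le_antisymm (h j) (hx.2.1 j))) ▸ zero_mem _)
  obtain ⟨t, hle, j, hj, heq⟩ := exists_min_ratio d x hx_pos
  refine ⟨d - t • x, sub_mem hdF (Submodule.smul_mem _ t hx.self_mem_faceSpace), fun i => ?_,
    fun h => hdx ?_, j, hj.ne', by simp [heq]⟩
  · rcases (hx.2.1 i).lt_or_eq with hi | hi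
    · simpa using hle i hi
    · simp [← hi, hd_supp i hi.symm]
  · rw [sub_eq_zero.mp h]
    exact Submodule.smul_mem _ t (Submodule.mem_span_singleton_self x)

theorem IsSolution.mem_hull_setOf_isVertexSolution (hx : IsSolution A C x) :
    x ∈ PointedCone.hull ℝ {v | IsVertexSolution A C v} := by
  induction hN : (Function.support x).ncard using Nat.strong_induction_on generalizing x with
  | _ N ih =>
  subst hN
  by_cases hx0 : x = 0
  · exact hx0 ▸ zero_mem _
  by_cases hF : faceSpace A x ≤ ℝ ∙ x
  · obtain ⟨t, ht, v, hv, rfl⟩ := hx.exists_isVertexSolution_smul_eq hx0 hF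
    exact PointedCone.smul_mem _ ht (PointedCone.subset_hull hv)
  obtain ⟨w, hwF, hw0, hwne, j₀, hxj₀, hwj₀⟩ := hx.exists_nonneg_mem_faceSpace hF
  have hw_supp := (mem_faceSpace.mp hwF).2
  obtain ⟨s, hs, he0, j₁, hwj₁, hej₁⟩ := exists_nonneg_sub_smul_eq_zero hx.2.1
    (Pi.lt_def.mp (hw0.lt_of_ne' hwne)).2
  have heF : x - s • w ∈ faceSpace A x :=
    sub_mem hx.self_mem_faceSpace (Submodule.smul_mem _ s hwF)
  have hxj₁ : x j₁ ≠ 0 := fun h => hwj₁.ne' (hw_supp j₁ h)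
  have hx_eq : x = (x - s • w) + s • w := (sub_add_cancel x _).symm
  rw [hx_eq]
  have he_lt := ncard_support_lt (mem_faceSpace.mp heF).2 hxj₁ hej₁
  have hw_lt := ncard_support_lt hw_supp hxj₀ hwj₀
  exact add_mem (ih _ he_lt (hx.of_mem_faceSpace heF he0) rfl)
    (PointedCone.smul_mem _ hs (ih _ hw_lt (hx.of_mem_faceSpace hwF hw0) rfl))

end Solutions

theorem solution_eq_nonneg_combination_of_vertex_solutions_general
    {m n : ℕ}
    (A : Matrix (Fin m) (Fin n) ℤ) (C : Finset (Fin n × Fin n))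
    (x : Fin n → ℝ) (hx : IsSolution A C x) :
    ∃ m' : ℕ, m' ≤ n ∧ ∃ (lam : Fin m' → ℝ) (v : Fin m' → (Fin n → ℝ)),
      (∀ i : Fin m', 0 ≤ lam i) ∧ (∀ i : Fin m', IsVertexSolution A C (v i)) ∧
        x = ∑ i : Fin m', lam i • v i := by
  obtain ⟨M, hM, mu, w, hmu, hw, hsum⟩ :=
    PointedCone.exists_nonneg_comb_card_le_finrank_of_mem_hull hx.mem_hull_setOf_isVertexSolution
  exact ⟨M, by simpa using hM, mu, w, hmu, hw, hsum⟩

/-- Every solution to Σ is a nonnegative linear combination of at most `n` vertex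
solutions. -/
theorem solution_eq_nonneg_combination_of_vertex_solutions
    {m n : ℕ} (hm : 0 < m) (hn : 0 < n)
    (A : Matrix (Fin m) (Fin n) ℤ) (C : Finset (Fin n × Fin n))
    (x : Fin n → ℝ) (hx : IsSolution A C x) :
    ∃ m' : ℕ, m' ≤ n ∧ ∃ (lam : Fin m' → ℝ) (v : Fin m' → (Fin n → ℝ)),
      (∀ i : Fin m', 0 ≤ lam i) ∧ (∀ i : Fin m', IsVertexSolution A C (v i)) ∧
        x = ∑ i : Fin m', lam i • v i :=
  solution_eq_nonneg_combination_of_vertex_solutions_general A C x hx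
end
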